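/- Any nonzero element W of the semigroup H that contains the letter L (i.e., is the class of a word containing L) is equal in H to a word of the form L·A, where A is a (possibly empty) word in the letters a1, a2, a3; in particular L occurs only as the first letter. -/

import Mathlib

inductive Phi
  | L | M | P | Q | R | g | s1 | s2 | t1 | t2 | t3 | a1 | a2 | a3
deriving DecidableEq

open Phi

abbrev W0 := WithZero (FreeMonoid Phi)

def w (l : List Phi) : W0 := ((FreeMonoid.ofList l : FreeMonoid Phi) : W0)

def ai : Fin 3 → Phi
  | 0 => a1 | 1 => a2 | 2 => a3

def ti : Fin 3 → Phi
  | 0 => t1 | 1 => t2 | 2 => t3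

def si : Fin 2 → Phi
  | 0 => s1 | 1 => s2

/-- `x` is one of the letters `a1, a2, a3`. -/
def isA (x : Phi) : Prop := x = a1 ∨ x = a2 ∨ x = a3

/-- The defining relations (1)–(14) of the semigroup `H`. -/
inductive rel : W0 → W0 → Prop
  | r1L (x : Phi) : rel (w [x, L]) 0
  | r1M (x : Phi) : rel (w [x, M]) 0
  | r2 : rel (w [L]) (w [M, P, g])
  | r3 (i : Fin 3) : rel (w [g, ai i]) (w [ai i, g])
  | r4 (x : Phi) (h : ¬ isA x) : rel (w [g, x]) 0
  | r5 (i j : Fin 3) : rel (w [ai i, g, ai j]) (w [ai i, R, s1, Q, ai j])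
  | r6 (i : Fin 3) (x : Phi) (h : x = R ∨ isA x) : rel (w [ti i, x]) (w [x, ti i])
  | r7 (i : Fin 3) : rel (w [P, ai i, ti i]) (w [ai i, P, s1])
  | r8 (i j : Fin 3) (h : i ≠ j) : rel (w [P, ai j, ti i]) (w [ai j, P, s2])
  | r9 (i : Fin 3) (j : Fin 2) : rel (w [si j, ai i]) (w [ai i, si j])
  | r10 : rel (w [s1, R]) (w [R, s1])
  | r11 (i : Fin 3) : rel (w [s1, Q, ai i]) (w [ti i, ai i, Q])
  | r12 : rel (w [P, R, s1]) 0
  | r13 (i : Fin 3) : rel (w [s2, R, ai i]) (w [ai i, s2, R])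
  | r14 (i : Fin 3) : rel (w [s2, R, Q, ai i]) (w [R, ti i, ai i, Q])

/-- The congruence on the free monoid with zero generated by the relations. -/
def hCon : Con W0 := conGen rel

/-- The semigroup (with zero) `H` of the paper. -/
abbrev H := hCon.Quotient

/-- The quotient map. -/
def q : W0 →* H := hCon.mk'

/-- `l` is a word in the letters `a1, a2, a3`. -/
def Aword (l : List Phi) : Prop := ∀ x ∈ l, isA x

/-- `l` is square-free: it contains no factor `Y ++ Y` with `Y` nonempty. -/
def SqFree (l : List Phi) : Prop := ∀ Y : List Phi, Y ≠ [] → ¬ (Y ++ Y) <:+: l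

/-! Rewriting `L` to `M P g`, the letter `g` commutes past the maximal prefix of letters `a_i`
that follows, and is then killed by the first other letter (relation (4)); a letter in front
of `L` kills it by relation (1). -/

lemma w_append (l₁ l₂ : List Phi) : w (l₁ ++ l₂) = w l₁ * w l₂ := by
  simp [w, ← WithZero.coe_mul]

lemma q_eq_of_rel {x y : W0} (h : rel x y) : q x = q y :=
  (Con.eq hCon).mpr (ConGen.Rel.of _ _ h)

lemma q_w_infix_congr {u v : List Phi} (h : q (w u) = q (w v)) (p s : List Phi) :
    q (w (p ++ u ++ s)) = q (w (p ++ v ++ s)) := by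
  simp only [w_append, map_mul, h]

lemma q_w_infix_eq_zero {u : List Phi} (h : q (w u) = q 0) (p s : List Phi) :
    q (w (p ++ u ++ s)) = q 0 := by
  rw [w_append, w_append, map_mul, map_mul, h, ← map_mul, ← map_mul, mul_zero, zero_mul]

lemma exists_eq_ai_of_isA {x : Phi} (h : isA x) : ∃ i : Fin 3, x = ai i := by
  rcases h with rfl | rfl | rfl
  exacts [⟨0, rfl⟩, ⟨1, rfl⟩, ⟨2, rfl⟩]

lemma Aword.cons {x : Phi} {A : List Phi} (hx : isA x) (hA : Aword A) : Aword (x :: A) := by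
  simpa [Aword] using ⟨hx, hA⟩

lemma exists_append_cons_of_not_Aword {t : List Phi} (h : ¬ Aword t) :
    ∃ A x r, t = A ++ x :: r ∧ Aword A ∧ ¬ isA x := by
  induction t with
  | nil => simp [Aword] at h
  | cons a t ih =>
    by_cases ha : isA a
    · obtain ⟨A, x, r, rfl, hA, hx⟩ := ih fun ht => h (ht.cons ha)
      exact ⟨a :: A, x, r, rfl, hA.cons ha, hx⟩
    · exact ⟨[], a, t, rfl, by simp [Aword], ha⟩

lemma q_g_cons_Aword {A : List Phi} (hA : Aword A) : q (w (g :: A)) = q (w (A ++ [g])) := by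
  induction A with
  | nil => rfl
  | cons a A ih =>
    obtain ⟨i, rfl⟩ := exists_eq_ai_of_isA (hA a List.mem_cons_self)
    calc q (w ([] ++ [g, ai i] ++ A))
        = q (w ([] ++ [ai i, g] ++ A)) := q_w_infix_congr (q_eq_of_rel (rel.r3 i)) _ _
      _ = q (w ([ai i] ++ (g :: A) ++ [])) := by simp
      _ = q (w ([ai i] ++ (A ++ [g]) ++ [])) :=
          q_w_infix_congr (ih fun x hx => hA x (List.mem_cons_of_mem _ hx)) _ _
      _ = q (w (ai i :: A ++ [g])) := by simp

lemma q_L_append_cons_eq_zero {A r : List Phi} {x : Phi} (hA : Aword A) (hx : ¬ isA x) :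
    q (w (L :: (A ++ x :: r))) = q 0 :=
  calc q (w ([] ++ [L] ++ (A ++ x :: r)))
      = q (w ([M, P] ++ g :: A ++ x :: r)) := by
        simpa using q_w_infix_congr (q_eq_of_rel rel.r2) [] (A ++ x :: r)
    _ = q (w ([M, P] ++ (A ++ [g]) ++ x :: r)) := q_w_infix_congr (q_g_cons_Aword hA) _ _
    _ = q (w ([M, P] ++ A ++ [g, x] ++ r)) := by simp
    _ = q 0 := q_w_infix_eq_zero (q_eq_of_rel (rel.r4 x hx)) _ _

lemma q_letter_L_eq_zero (p t : List Phi) (x : Phi) : q (w (p ++ x :: L :: t)) = q 0 := by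
  simpa using q_w_infix_eq_zero (q_eq_of_rel (rel.r1L x)) p t

/-- any nonzero element of `H` represented by a word containing `L`
equals some `L·A` with `A` a word in `a1, a2, a3`. -/
theorem stmt1 (W : List Phi) (hL : L ∈ W) (hnz : q (w W) ≠ q 0) :
    ∃ A : List Phi, Aword A ∧ q (w W) = q (w (L :: A)) := by
  obtain ⟨s, t, rfl⟩ := List.append_of_mem hL
  rcases List.eq_nil_or_concat s with rfl | ⟨p, x, rfl⟩
  · by_cases ht : Aword t
    · exact ⟨t, ht, rfl⟩
    · obtain ⟨A, x, r, rfl, hA, hx⟩ := exists_append_cons_of_not_Aword ht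
      exact absurd (q_L_append_cons_eq_zero hA hx) hnz
  · exact absurd (by simpa using q_letter_L_eq_zero p t x) hnz
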